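/- arXiv:1909.12175 — 2 statements merged into one kernel-verified Lean document; each statement's English description precedes it below -/
import Mathlib

section
/- The uniform matroid U_{2,5} is not 3-entropic: there is no probability distribution on {0,1,2}^5 with random variables X_1,…,X_5 such that the base-3 Shannon entropy satisfies H(X_S) = min(|S|, 2) for every subset S of {1,…,5}. -/
open scoped Classical BigOperators

/-- Shannon entropy in base `q` of a probability mass function on a finite type. -/
noncomputable def shannonEntropy {α : Type*} [Fintype α] (q : ℝ) (μ : PMF α) : ℝ :=
  -∑ x : α, (μ x).toReal * Real.logb q (μ x).toReal

/-- Marginal of a distribution on `ι → α` on the coordinates in `S`. -/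
noncomputable def marg {ι α : Type*} (μ : PMF (ι → α)) (S : Finset ι) :
    PMF ({ i // i ∈ S } → α) :=
  μ.map fun x i => x i.1

/-!
If `μ` realised `U_{2,5}`, every pair of coordinates would have entropy `2`, which is both the
joint entropy and `log₃ 9`, the largest entropy a pair can have. Equality in the data processing
inequality makes any two coordinates determine a point of the support, and equality in the
maximum entropy bound makes every pair of values occur, so the support is an orthogonal array of
strength 2 and index 1 with 5 columns over 3 symbols. In such an array over `q` symbols, fix a
point `c`: for every column `i` at least `q - 1` other points agree with `c` in column `i`, and no
point other than `c` agrees with it in two columns; hence `n (q - 1) ≤ q² - 1`, i.e. `n ≤ q + 1`,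
and `5 ≤ 4` is absurd.
-/

open Real Finset

namespace PMF

variable {α β : Type*} [Fintype α]

lemma sum_toReal (μ : PMF α) : ∑ x, (μ x).toReal = 1 := by
  have h := μ.tsum_coe
  rw [tsum_fintype] at h
  rw [← ENNReal.toReal_sum fun x _ => μ.apply_ne_top x, h, ENNReal.toReal_one]

lemma toReal_map_apply (μ : PMF α) (f : α → β) (y : β) :
    ((μ.map f) y).toReal = ∑ x with f x = y, (μ x).toReal := by
  have : (μ.map f) y = ∑ x with f x = y, μ x := by
    simp only [map_apply, tsum_fintype, sum_filter, eq_comm]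
  rw [this, ENNReal.toReal_sum fun x _ => μ.apply_ne_top x]

lemma toReal_le_toReal_map_apply (μ : PMF α) (f : α → β) (x : α) :
    (μ x).toReal ≤ ((μ.map f) (f x)).toReal := by
  rw [toReal_map_apply]
  exact single_le_sum (fun _ _ => ENNReal.toReal_nonneg) (by simp)

lemma toReal_map_apply_of_injective (μ : PMF α) {f : α → β} (hf : f.Injective) (x : α) :
    ((μ.map f) (f x)).toReal = (μ x).toReal := by
  simp [hf.eq_iff]

end PMF

section Entropy

variable {α β : Type*} [Fintype α] [Fintype β] (b : ℝ)

lemma shannonEntropy_eq_sum_negMulLog (μ : PMF α) :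
    shannonEntropy b μ = (∑ x, negMulLog (μ x).toReal) / log b := by
  rw [shannonEntropy, sum_div, ← sum_neg_distrib]
  refine sum_congr rfl fun x _ => ?_
  rw [negMulLog, logb]
  ring

lemma shannonEntropy_map (μ : PMF α) (f : α → β) :
    shannonEntropy b (μ.map f) = -∑ x, (μ x).toReal * logb b ((μ.map f) (f x)).toReal := by
  rw [shannonEntropy,
    ← sum_fiberwise univ f fun x => (μ x).toReal * logb b ((μ.map f) (f x)).toReal]
  congr 1
  refine sum_congr rfl fun y _ => ?_
  calc ((μ.map f) y).toReal * logb b ((μ.map f) y).toReal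
      = (∑ x with f x = y, (μ x).toReal) * logb b ((μ.map f) y).toReal := by
        rw [← μ.toReal_map_apply]
    _ = _ := by
        rw [sum_mul]
        exact sum_congr rfl fun x hx => by rw [(mem_filter.1 hx).2]

lemma shannonEntropy_map_of_injective (μ : PMF α) {f : α → β} (hf : f.Injective) :
    shannonEntropy b (μ.map f) = shannonEntropy b μ := by
  rw [shannonEntropy_map, shannonEntropy]
  simp only [μ.toReal_map_apply_of_injective hf]

variable {b}

lemma toReal_map_apply_eq_of_shannonEntropy_map_eq (hb : 1 < b) {μ : PMF α} {f : α → β}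
    (h : shannonEntropy b (μ.map f) = shannonEntropy b μ) {x : α} (hx : x ∈ μ.support) :
    ((μ.map f) (f x)).toReal = (μ x).toReal := by
  set p : α → ℝ := fun x => (μ x).toReal
  set q : α → ℝ := fun x => ((μ.map f) (f x)).toReal
  have hterm : ∀ x, 0 ≤ p x * (logb b (q x) - logb b (p x)) := by
    intro x
    rcases (ENNReal.toReal_nonneg : 0 ≤ p x).eq_or_lt with h0 | h0
    · rw [show p x = 0 from h0.symm, zero_mul]
    · exact mul_nonneg h0.le <| sub_nonneg.2 <|
        logb_le_logb_of_le hb h0 (μ.toReal_le_toReal_map_apply f x)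
  have hsum : ∑ x, p x * (logb b (q x) - logb b (p x)) = 0 := by
    rw [shannonEntropy_map, shannonEntropy] at h
    simp only [mul_sub, sum_sub_distrib]
    linarith
  have hpx : 0 < p x := ENNReal.toReal_pos ((μ.mem_support_iff x).1 hx) (μ.apply_ne_top x)
  refine le_antisymm ?_ (μ.toReal_le_toReal_map_apply f x)
  by_contra! hlt
  have := (sum_eq_zero_iff_of_nonneg fun x _ => hterm x).1 hsum x (mem_univ x)
  have := mul_pos hpx (sub_pos.2 (logb_lt_logb hb hpx hlt))
  linarith

lemma injOn_support_of_shannonEntropy_map_eq (hb : 1 < b) {μ : PMF α} {f : α → β}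
    (h : shannonEntropy b (μ.map f) = shannonEntropy b μ) : Set.InjOn f μ.support := by
  intro x hx x' hx' hfx
  by_contra hne
  have hfiber : (μ x).toReal + (μ x').toReal ≤ ((μ.map f) (f x)).toReal := by
    calc (μ x).toReal + (μ x').toReal = ∑ z ∈ {x, x'}, (μ z).toReal :=
          (sum_pair (f := fun z => (μ z).toReal) hne).symm
      _ ≤ ∑ z with f z = f x, (μ z).toReal :=
        sum_le_sum_of_subset_of_nonneg (by simp [insert_subset_iff, hfx])
          fun _ _ _ => ENNReal.toReal_nonneg
      _ = _ := (μ.toReal_map_apply f (f x)).symm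
  have := toReal_map_apply_eq_of_shannonEntropy_map_eq hb h hx
  have := ENNReal.toReal_pos ((μ.mem_support_iff x').1 hx') (μ.apply_ne_top x')
  linarith

lemma PMF.support_eq_univ_of_shannonEntropy_eq (hb : 1 < b) {ν : PMF β}
    (h : shannonEntropy b ν = logb b (Fintype.card β : ℝ)) : ν.support = Set.univ := by
  have : Nonempty β := ν.support_nonempty.to_subtype.map Subtype.val
  set n : ℝ := (Fintype.card β : ℝ)
  have hn : 0 < n := by positivity
  have hH : ∑ y, negMulLog (ν y).toReal = log n := by
    rwa [shannonEntropy_eq_sum_negMulLog, logb, div_left_inj' (log_pos hb).ne'] at h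
  have hmean : ∑ y, n⁻¹ • (ν y).toReal = n⁻¹ := by
    rw [← smul_sum, ν.sum_toReal, smul_eq_mul, mul_one]
  have hjensen := strictConcaveOn_negMulLog.map_sum_eq_iff (t := univ) (w := fun _ => n⁻¹)
    (p := fun y => (ν y).toReal) (fun _ _ => by positivity)
    (by simp [n, card_univ]) (fun _ _ => Set.mem_Ici.2 ENNReal.toReal_nonneg)
  have heq : negMulLog (∑ y, n⁻¹ • (ν y).toReal) = ∑ y, n⁻¹ • negMulLog (ν y).toReal := by
    rw [hmean, ← smul_sum, hH, negMulLog, log_inv, smul_eq_mul]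
    ring
  refine Set.eq_univ_of_forall fun y hy => ?_
  have := hjensen.1 heq y (mem_univ y)
  rw [hmean, hy, ENNReal.toReal_zero] at this
  exact (inv_pos.2 hn).ne this

end Entropy

section OrthogonalArray

variable {ι α : Type*}

/-- Orthogonal array of strength 2 and index 1, i.e. an MDS code of dimension 2. -/
def IsOrthogonalArray (C : Set (ι → α)) : Prop :=
  ∀ i j, i ≠ j → Set.BijOn (fun x => (x i, x j)) C Set.univ

theorem IsOrthogonalArray.card_le [Fintype ι] [Fintype α] {C : Set (ι → α)}
    (hC : IsOrthogonalArray C) (hα : 1 < Fintype.card α) :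
    Fintype.card ι ≤ Fintype.card α + 1 := by
  by_cases hι : Fintype.card ι ≤ 1
  · omega
  rw [not_le] at hι
  obtain ⟨i₀, j₀, hij₀⟩ := Fintype.exists_pair_of_one_lt_card hι
  have : Nonempty α := Fintype.card_pos_iff.1 (by omega)
  obtain ⟨c, hc, -⟩ := (hC i₀ j₀ hij₀).surjOn
    (Set.mem_univ (Classical.arbitrary α, Classical.arbitrary α))
  set D := C.toFinset
  let F : ι → Finset (ι → α) := fun i => {x ∈ D | x i = c i ∧ x ≠ c}
  have hF : ∀ i, Fintype.card α - 1 ≤ #(F i) := by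
    intro i
    obtain ⟨j, hji⟩ := Fintype.exists_ne_of_one_lt_card hι i
    calc Fintype.card α - 1 = #(univ.erase (c j)) := by
          rw [card_erase_of_mem (mem_univ _), card_univ]
      _ ≤ #(F i) := card_le_card_of_surjOn (· j) fun a ha => ?_
    obtain ⟨x, hx, hxa⟩ := (hC i j hji.symm).surjOn (Set.mem_univ (c i, a))
    simp only [Prod.mk.injEq] at hxa
    refine ⟨x, ?_, hxa.2⟩
    simp only [F, D, coe_filter, Set.mem_ofPred_eq, Set.mem_toFinset]
    exact ⟨hx, hxa.1, fun hxc => (mem_erase.1 ha).1 (hxc ▸ hxa.2).symm⟩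
  have hdisj : ((univ : Finset ι) : Set ι).PairwiseDisjoint F := by
    intro i _ j _ hij
    refine disjoint_left.2 fun x hxi hxj => ?_
    simp only [F, D, mem_filter, Set.mem_toFinset] at hxi hxj
    exact hxi.2.2 ((hC i j hij).injOn hxi.1 hc (Prod.ext hxi.2.1 hxj.2.1))
  have hsub : univ.biUnion F ⊆ D.erase c := by
    intro x
    simp only [F, mem_biUnion, mem_filter, mem_erase]
    tauto
  have hcD : c ∈ D := Set.mem_toFinset.2 hc
  have hD : #D ≤ Fintype.card α * Fintype.card α := by
    simpa using card_le_card_of_injOn (s := D) (t := univ) (fun x : ι → α => (x i₀, x j₀))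
      (fun _ _ => mem_univ _) (by simpa [D] using (hC i₀ j₀ hij₀).injOn)
  have hcount : Fintype.card ι * (Fintype.card α - 1) + 1 ≤ Fintype.card α * Fintype.card α :=
    calc Fintype.card ι * (Fintype.card α - 1) + 1
        = ∑ _ : ι, (Fintype.card α - 1) + 1 := by simp
      _ ≤ ∑ i, #(F i) + 1 := by gcongr with i; exact hF i
      _ = #(univ.biUnion F) + 1 := by rw [card_biUnion hdisj]
      _ ≤ #(D.erase c) + 1 := by gcongr
      _ = #D := card_erase_add_one hcD
      _ ≤ _ := hD
  obtain ⟨p, hp⟩ : ∃ p, Fintype.card α = p + 2 := ⟨Fintype.card α - 2, by omega⟩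
  rw [hp, show p + 2 - 1 = p + 1 by omega] at hcount
  rw [hp]
  nlinarith

end OrthogonalArray

section Marginal

variable {ι α : Type*} [Fintype α] (b : ℝ)

lemma shannonEntropy_marg_univ [Fintype ι] [DecidableEq ι] (μ : PMF (ι → α)) :
    shannonEntropy b (marg μ univ) = shannonEntropy b μ :=
  shannonEntropy_map_of_injective b μ fun _ _ h => funext fun i => congrFun h ⟨i, mem_univ i⟩

lemma shannonEntropy_marg_pair [DecidableEq ι] (μ : PMF (ι → α)) {i j : ι} (hij : i ≠ j) :
    shannonEntropy b (marg μ {i, j}) = shannonEntropy b (μ.map fun x => (x i, x j)) := by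
  let e : α × α → ({t // t ∈ ({i, j} : Finset ι)} → α) :=
    fun a t => if t.1 = i then a.1 else a.2
  have he : e.Injective := fun a a' h => Prod.ext
    (by simpa [e] using congrFun h ⟨i, by simp⟩)
    (by simpa [e, hij.symm] using congrFun h ⟨j, by simp⟩)
  have hmarg : marg μ {i, j} = (μ.map fun x => (x i, x j)).map e := by
    rw [PMF.map_comp, marg]
    congr 1
    funext x ⟨t, ht⟩
    simp only [mem_insert, mem_singleton] at ht
    rcases ht with rfl | rfl
    · simp [e]
    · simp [e, hij.symm]
  rw [hmarg, shannonEntropy_map_of_injective b _ he]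

end Marginal

/-- The uniform matroid `U_{2,5}` is not 3-entropic. -/
theorem U25_not_three_entropic :
    ¬ ∃ μ : PMF (Fin 5 → Fin 3),
      ∀ S : Finset (Fin 5),
        shannonEntropy 3 (marg μ S) = (min S.card 2 : ℕ) := by
  rintro ⟨μ, hμ⟩
  have hjoint : shannonEntropy 3 μ = 2 := by
    simpa [shannonEntropy_marg_univ] using hμ univ
  have hpair : ∀ i j : Fin 5, i ≠ j → shannonEntropy 3 (μ.map fun x => (x i, x j)) = 2 := by
    intro i j hij
    simpa [shannonEntropy_marg_pair, hij, card_pair hij] using hμ {i, j}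
  have hlogb : logb 3 (Fintype.card (Fin 3 × Fin 3) : ℝ) = 2 := by
    rw [Fintype.card_prod, Fintype.card_fin, Nat.cast_mul, ← sq, logb_pow]
    norm_num [logb_self_eq_one]
  have hC : IsOrthogonalArray μ.support := fun i j hij =>
    ⟨Set.mapsTo_univ _ _,
      injOn_support_of_shannonEntropy_map_eq (by norm_num) ((hpair i j hij).trans hjoint.symm),
      by rw [Set.SurjOn, ← PMF.support_map,
        PMF.support_eq_univ_of_shannonEntropy_eq (by norm_num) ((hpair i j hij).trans hlogb.symm)]⟩
  have := hC.card_le (by simp)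
  simp at this
end

section
/- For every integer p ≥ 2, the uniform matroid U_{2,p+2} is not p-entropic: there is no probability distribution on [p]^{p+2} with random variables X_1,…,X_{p+2} such that the base-p Shannon entropy satisfies H(X_S) = min(|S|, 2) for every subset S of {1,…,p+2}. -/
open scoped Classical BigOperators

/-!
Let `C` be the support of a distribution on `[p]^n` realising `U_{2,n}`. A distribution of maximal
entropy has full support, and a map that does not lower the entropy is injective on the support.
As every pair of coordinates, and every larger set, has entropy `2 = log_p p²`, the map
`x ↦ (x i, x j)` is a bijection from `C` onto `[p]²` for each `i ≠ j`: `C` is an orthogonal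
array of strength 2 and index 1. Fix `z ∈ C`; for each coordinate `i`, exactly `p - 1` words of
`C \ {z}` agree with `z` at `i`, and none agrees with `z` at two coordinates. Hence
`n (p - 1) ≤ |C| - 1 = p² - 1`, i.e. `n ≤ p + 1`, which fails for `n = p + 2`.
-/

open Finset Real

namespace PMF

variable {α β : Type*} [Fintype α]

lemma sum_toReal_eq_one (ν : PMF α) : ∑ a, (ν a).toReal = 1 := by
  have h := ν.tsum_coe
  rw [tsum_fintype] at h
  rw [← ENNReal.toReal_sum fun a _ => ν.apply_ne_top a, h, ENNReal.toReal_one]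

lemma toReal_map_apply_s4 (ν : PMF α) (g : α → β) (b : β) :
    (ν.map g b).toReal = ∑ a with g a = b, (ν a).toReal := by
  rw [map_apply, tsum_fintype,
    ENNReal.toReal_sum fun a _ => by split_ifs <;> simp [ν.apply_ne_top], sum_filter]
  refine sum_congr rfl fun a _ => ?_
  by_cases h : g a = b
  · simp [h]
  · simp [h, Ne.symm h]

end PMF

section Entropy

variable {α β : Type*} [Fintype α] [Fintype β] {q : ℝ}

lemma shannonEntropy_eq_sum_negMulLog_div (ν : PMF α) :
    shannonEntropy q ν = (∑ a, negMulLog (ν a).toReal) / log q := by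
  simp only [shannonEntropy, negMulLog, logb, sum_div, ← sum_neg_distrib]
  refine sum_congr rfl fun a _ => ?_
  ring

lemma apply_ne_zero_of_shannonEntropy_eq_logb_card (hq : 1 < q) (ν : PMF α)
    (h : shannonEntropy q ν = logb q (Fintype.card α)) (a : α) : ν a ≠ 0 := by
  intro ha
  set n : ℝ := (Fintype.card α : ℝ)
  have hn : 0 < n := by
    have : Nonempty α := ⟨a⟩
    positivity
  have hH : ∑ b, negMulLog (ν b).toReal = log n := by
    rwa [shannonEntropy_eq_sum_negMulLog_div, logb, div_left_inj' (log_pos hq).ne'] at h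
  -- Equality in `negMulLog y ≤ 1 - y` needs `y = 1`, which fails at `a`.
  have hlt : ∑ b, negMulLog (n * (ν b).toReal) < ∑ b, (1 - n * (ν b).toReal) :=
    sum_lt_sum (fun b _ => negMulLog_le_one_sub_self (by positivity))
      ⟨a, mem_univ a, negMulLog_lt_one_sub_self (by positivity) (by simp [ha])⟩
  have hrhs : ∑ b, (1 - n * (ν b).toReal) = 0 := by
    rw [sum_sub_distrib, ← mul_sum, ν.sum_toReal_eq_one]
    simp [n]
  have hlhs : ∑ b, negMulLog (n * (ν b).toReal) = 0 := by
    simp only [negMulLog_mul, sum_add_distrib, ← sum_mul, ← mul_sum, ν.sum_toReal_eq_one, hH]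
    simp [negMulLog]
  linarith

lemma injOn_support_of_shannonEntropy_map_eq_s4 (hq : 1 < q) (ν : PMF α) (g : α → β)
    (h : shannonEntropy q (ν.map g) = shannonEntropy q ν) : Set.InjOn g ν.support := by
  rw [shannonEntropy_eq_sum_negMulLog_div, shannonEntropy_eq_sum_negMulLog_div,
    div_left_inj' (log_pos hq).ne'] at h
  set f : α → ℝ := fun a => (ν a).toReal
  set w : β → ℝ := fun b => (ν.map g b).toReal
  have hw : ∀ b, w b = ∑ a with g a = b, f a := ν.toReal_map_apply_s4 g
  have hf_le : ∀ a, f a ≤ w (g a) := fun a => by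
    rw [hw]
    exact single_le_sum (fun a _ => ENNReal.toReal_nonneg) (by simp)
  have hmap : ∑ b, negMulLog (w b) = ∑ a, -(f a * log (w (g a))) := by
    rw [← sum_fiberwise univ g]
    refine sum_congr rfl fun b _ => ?_
    rw [sum_congr rfl fun a ha => by rw [(mem_filter.mp ha).2], sum_neg_distrib, ← sum_mul,
      ← hw, negMulLog, neg_mul]
  intro a ha a' ha' hg
  by_contra hne
  have hfa : 0 < f a := ENNReal.toReal_pos ha (ν.apply_ne_top a)
  have hlt : f a < w (g a) := by
    have hpair : f a + f a' ≤ w (g a) := by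
      rw [hw, ← sum_pair hne]
      exact sum_le_sum_of_subset_of_nonneg (by simp [insert_subset_iff, hg])
        fun _ _ _ => ENNReal.toReal_nonneg
    linarith [ENNReal.toReal_pos ha' (ν.apply_ne_top a')]
  have : ∑ a, -(f a * log (w (g a))) < ∑ a, negMulLog (f a) := by
    refine sum_lt_sum (fun b _ => ?_) ⟨a, mem_univ a, ?_⟩
    · rcases (ENNReal.toReal_nonneg (a := ν b)).eq_or_lt with hb | hb
      · simp [negMulLog, f, ← hb]
      · simpa [negMulLog] using mul_le_mul_of_nonneg_left (log_le_log hb (hf_le b)) hb.le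
    · simpa [negMulLog] using mul_lt_mul_of_pos_left (log_lt_log hfa hlt) hfa
  linarith

end Entropy

section Marginal

variable {ι α : Type*} {q : ℝ} (μ : PMF (ι → α))

lemma marg_eq_map_marg {S T : Finset ι} (hST : S ⊆ T) :
    marg μ S = (marg μ T).map fun y i => y ⟨i.1, hST i.2⟩ := by
  rw [marg, marg, PMF.map_comp]
  rfl

lemma restrict_mem_support_marg {x : ι → α} (hx : x ∈ μ.support) (T : Finset ι) :
    (fun i : T => x i) ∈ (marg μ T).support := by
  rw [marg, PMF.support_map]
  exact ⟨x, hx, rfl⟩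

lemma exists_mem_support_eqOn_of_shannonEntropy_marg_eq_logb [DecidableEq ι] [Fintype α]
    (hq : 1 < q) {S : Finset ι}
    (h : shannonEntropy q (marg μ S) = logb q (Fintype.card α ^ #S)) (a : ι → α) :
    ∃ x ∈ μ.support, Set.EqOn x a S := by
  have hfull := apply_ne_zero_of_shannonEntropy_eq_logb_card hq (marg μ S) (by simpa using h)
    fun i => a i
  rw [← PMF.mem_support_iff, marg, PMF.support_map] at hfull
  obtain ⟨x, hx, hxa⟩ := hfull
  exact ⟨x, hx, fun i hi => congrFun hxa ⟨i, hi⟩⟩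

lemma eqOn_of_shannonEntropy_marg_eq [DecidableEq ι] [Fintype α] (hq : 1 < q) {S T : Finset ι}
    (hST : S ⊆ T) (h : shannonEntropy q (marg μ S) = shannonEntropy q (marg μ T))
    {x y : ι → α} (hx : x ∈ μ.support) (hy : y ∈ μ.support) (hxy : Set.EqOn x y S) :
    Set.EqOn x y T := by
  rw [marg_eq_map_marg μ hST] at h
  have := injOn_support_of_shannonEntropy_map_eq_s4 hq _ _ h (restrict_mem_support_marg μ hx T)
    (restrict_mem_support_marg μ hy T) (funext fun i => hxy i.2)
  exact fun i hi => congrFun this ⟨i, hi⟩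

lemma bijOn_support_of_shannonEntropy_marg_pair [DecidableEq ι] [Fintype ι] [Fintype α]
    (hq : 1 < q) {i j : ι} (hij : i ≠ j)
    (hpair : shannonEntropy q (marg μ {i, j}) = logb q (Fintype.card α ^ 2))
    (huniv : shannonEntropy q (marg μ univ) = shannonEntropy q (marg μ {i, j})) :
    Set.BijOn (fun x : ι → α => (x i, x j)) ↑μ.support.toFinset Set.univ := by
  rw [Set.coe_toFinset]
  refine ⟨Set.mapsTo_univ _ _, fun x hx y hy hxy => ?_, fun ab _ => ?_⟩
  · rw [Prod.mk.injEq] at hxy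
    have := eqOn_of_shannonEntropy_marg_eq μ hq (subset_univ {i, j}) huniv.symm hx hy
      (by simp [Set.EqOn, hxy])
    rwa [coe_univ, Set.eqOn_univ] at this
  · obtain ⟨x, hx, hxa⟩ := exists_mem_support_eqOn_of_shannonEntropy_marg_eq_logb μ hq
      (S := {i, j}) (by rwa [card_pair hij]) fun k => if k = j then ab.2 else ab.1
    refine ⟨x, hx, ?_⟩
    have hi : i ∈ ({i, j} : Finset ι) := mem_insert_self i {j}
    have hj : j ∈ ({i, j} : Finset ι) := mem_insert_of_mem (mem_singleton_self j)
    simp [hxa hi, hxa hj, hij]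

end Marginal

section OrthogonalArray

variable {ι α : Type*} [Fintype α] {C : Finset (ι → α)}

lemma card_filter_apply_eq_of_bijOn {i j : ι}
    (h : Set.BijOn (fun x : ι → α => (x i, x j)) ↑C Set.univ) (a : α) :
    #{x ∈ C | x i = a} = Fintype.card α := by
  rw [← card_univ]
  refine card_nbij (fun x => x j) (fun _ _ => mem_univ _) ?_ ?_
  · intro x hx y hy hxy
    simp only [mem_coe, mem_filter] at hx hy
    exact h.injOn hx.1 hy.1 (Prod.ext (hx.2.trans hy.2.symm) hxy)
  · intro b _
    obtain ⟨x, hx : x ∈ C, hxab⟩ := h.surjOn (Set.mem_univ (a, b))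
    simp only [Prod.mk.injEq] at hxab
    exact ⟨x, by simp [hx, hxab.1], hxab.2⟩

theorem card_le_card_add_one_of_bijOn_pairs [Fintype ι] (hα : 1 < Fintype.card α)
    (hC : ∀ i j, i ≠ j → Set.BijOn (fun x : ι → α => (x i, x j)) ↑C Set.univ) :
    Fintype.card ι ≤ Fintype.card α + 1 := by
  rcases le_or_gt (Fintype.card ι) 1 with hι | hι
  · omega
  obtain ⟨i₀, j₀, h₀⟩ := Fintype.exists_pair_of_one_lt_card hι
  obtain ⟨a⟩ : Nonempty α := Fintype.card_pos_iff.mp (by omega)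
  obtain ⟨z, hz : z ∈ C, -⟩ := (hC i₀ j₀ h₀).surjOn (Set.mem_univ (a, a))
  set q := Fintype.card α
  set B : ι → Finset (ι → α) := fun i => {x ∈ C | x i = z i}.erase z
  have hB : ∀ i, #(B i) = q - 1 := fun i => by
    obtain ⟨j, hj⟩ := Fintype.exists_ne_of_one_lt_card hι i
    rw [card_erase_of_mem (by simp [hz]), card_filter_apply_eq_of_bijOn (hC i j hj.symm)]
  -- a word agreeing with `z` in two coordinates is `z`
  have hdisj : ((univ : Finset ι) : Set ι).PairwiseDisjoint B := by
    intro i _ j _ hij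
    rw [Function.onFun, disjoint_left]
    intro x hxi hxj
    simp only [B, mem_erase, mem_filter] at hxi hxj
    exact hxi.1 ((hC i j hij).injOn hxi.2.1 hz (Prod.ext hxi.2.2 hxj.2.2))
  have hC_card : #C ≤ q * q := by
    simpa using card_le_card_of_injOn _ (fun _ _ => mem_univ _) (hC i₀ j₀ h₀).injOn
  have hcount : Fintype.card ι * (q - 1) ≤ (q + 1) * (q - 1) := calc
    Fintype.card ι * (q - 1) = #(univ.biUnion B) := by simp [card_biUnion hdisj, hB]
    _ ≤ #(C.erase z) := card_le_card <| biUnion_subset.mpr fun i _ =>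
      erase_subset_erase _ (filter_subset _ _)
    _ ≤ (q + 1) * (q - 1) := by rw [card_erase_of_mem hz, ← mul_self_tsub_one]; omega
  exact Nat.le_of_mul_le_mul_right hcount (by omega)

end OrthogonalArray

/-- For every integer `p ≥ 2`, the uniform matroid `U_{2,p+2}` is not `p`-entropic. -/
theorem U2_p_add_two_not_p_entropic (p : ℕ) (hp : 2 ≤ p) :
    ¬ ∃ μ : PMF (Fin (p + 2) → Fin p),
      ∀ S : Finset (Fin (p + 2)),
        shannonEntropy p (marg μ S) = (min S.card 2 : ℕ) := by
  rintro ⟨μ, hμ⟩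
  have hq : (1 : ℝ) < p := by exact_mod_cast hp
  have hpair {i j : Fin (p + 2)} (hij : i ≠ j) : shannonEntropy p (marg μ {i, j}) = 2 := by
    rw [hμ, card_pair hij]; simp
  have hbij (i j : Fin (p + 2)) (hij : i ≠ j) :
      Set.BijOn (fun x : Fin (p + 2) → Fin p => (x i, x j)) ↑μ.support.toFinset Set.univ := by
    refine bijOn_support_of_shannonEntropy_marg_pair μ hq hij ?_ ?_
    · rw [hpair hij, Fintype.card_fin, logb_pow, logb_self_eq_one hq]
      norm_num
    · rw [hpair hij, hμ, card_univ, Fintype.card_fin, min_eq_right (by omega)]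
      norm_num
  simpa using card_le_card_add_one_of_bijOn_pairs (by simp; omega) hbij
end
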